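/- If each f_n commutes with f, each f_n is surjective, Σ_{n=1}^∞ D(f_n, f) < ∞, and the proximal cell Prox_F(x) is dense in X for every x ∈ X, then the proximal cell Prox_f(x) = {y : liminf_{n→∞} d(f^n(x), f^n(y)) = 0} is dense in X for every x ∈ X. -/
import Mathlib


open Filter Metric Set

noncomputable def supD {X : Type*} [MetricSpace X] (g h : X → X) : ℝ :=
  ⨆ x, dist (g x) (h x)

def omega {X : Type*} (fn : ℕ → X → X) : ℕ → X → X
  | 0 => id
  | k + 1 => fn (k + 1) ∘ omega fn k

def omegaSeg {X : Type*} (fn : ℕ → X → X) (n : ℕ) : ℕ → X → X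
  | 0 => id
  | k + 1 => fn (n + k + 1) ∘ omegaSeg fn n k

section Aux

variable {X : Type*} [MetricSpace X] [CompactSpace X] [Nonempty X]

lemma dist_le_supD {g h : X → X} (hg : Continuous g) (hh : Continuous h) (x : X) :
    dist (g x) (h x) ≤ supD g h :=
  le_ciSup (isCompact_range (hg.dist hh)).bddAbove x

lemma omega_continuous (fn : ℕ → X → X) (hfn : ∀ n, Continuous (fn n)) (n : ℕ) :
    Continuous (omega fn n) := by
  induction n with
  | zero => exact continuous_id
  | succ k ih => exact (hfn (k + 1)).comp ih

lemma omega_surjective (fn : ℕ → X → X) (h : ∀ n, Function.Surjective (fn n)) (n : ℕ) :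
    Function.Surjective (omega fn n) := by
  induction n with
  | zero => exact Function.surjective_id
  | succ k ih => exact (h (k + 1)).comp ih

lemma comm_iterate (f : X → X) (fn : ℕ → X → X) (hcomm : ∀ n, fn n ∘ f = f ∘ fn n)
    (n k : ℕ) (x : X) : fn n (f^[k] x) = f^[k] (fn n x) := by
  induction k generalizing x with
  | zero => rfl
  | succ j ih =>
    rw [Function.iterate_succ_apply, Function.iterate_succ_apply]
    calc fn n (f^[j] (f x)) = f^[j] (fn n (f x)) := ih (f x)
    _ = f^[j] (f (fn n x)) := by
      have h := congrFun (hcomm n) x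
      simp only [Function.comp_apply] at h
      rw [h]

lemma telescope (f : X → X) (fn : ℕ → X → X) (hf : Continuous f)
    (hfn : ∀ n, Continuous (fn n)) (hcomm : ∀ n, fn n ∘ f = f ∘ fn n) :
    ∀ k m (z : X), dist (f^[k] (omega fn m z)) (omega fn (m + k) z) ≤
      ∑ j ∈ Finset.Ico m (m + k), supD (fn (j + 1)) f := by
  intro k
  induction k with
  | zero => intro m z; simp
  | succ j ih =>
    intro m z
    have hidx : m + (j + 1) = (m + 1) + j := by omega
    rw [hidx]
    have h1 : omega fn (m + 1) z = fn (m + 1) (omega fn m z) := rfl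
    have h2 : f^[j + 1] (omega fn m z) = f (f^[j] (omega fn m z)) :=
      Function.iterate_succ_apply' f j _
    have hstep : dist (f^[j + 1] (omega fn m z)) (f^[j] (omega fn (m + 1) z)) ≤
        supD (fn (m + 1)) f := by
      rw [h1, h2, ← comm_iterate f fn hcomm (m + 1) j, dist_comm]
      exact dist_le_supD (hfn (m + 1)) hf _
    have hsumeq : ∑ j' ∈ Finset.Ico m ((m + 1) + j), supD (fn (j' + 1)) f =
        supD (fn (m + 1)) f + ∑ j' ∈ Finset.Ico (m + 1) ((m + 1) + j), supD (fn (j' + 1)) f :=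
      Finset.sum_eq_sum_Ico_succ_bot (by omega) _
    rw [hsumeq]
    calc dist (f^[j + 1] (omega fn m z)) (omega fn ((m + 1) + j) z)
        ≤ dist (f^[j + 1] (omega fn m z)) (f^[j] (omega fn (m + 1) z)) +
          dist (f^[j] (omega fn (m + 1) z)) (omega fn ((m + 1) + j) z) := dist_triangle _ _ _
      _ ≤ supD (fn (m + 1)) f + ∑ j' ∈ Finset.Ico (m + 1) ((m + 1) + j), supD (fn (j' + 1)) f :=
          add_le_add hstep (ih (m + 1) z)

lemma tail_small (e : ℕ → ℝ) (hsum : Summable e) {ε : ℝ} (hε : 0 < ε) :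
    ∃ m : ℕ, ∀ n, ∑ j ∈ Finset.Ico m n, e j < ε := by
  obtain ⟨s, hs⟩ := summable_iff_vanishing.mp hsum (Iio ε) (Iio_mem_nhds hε)
  refine ⟨s.sup id + 1, fun n => ?_⟩
  have hdisj : Disjoint (Finset.Ico (s.sup id + 1) n) s := by
    rw [Finset.disjoint_left]
    intro a ha hb
    have h1 : a ≤ s.sup id := Finset.le_sup (f := id) hb
    have h2 := (Finset.mem_Ico.mp ha).1
    omega
  exact hs _ hdisj

lemma frequently_lt_of_liminf_eq_zero {u : ℕ → ℝ} (hb : ∃ C, ∀ n, u n ≤ C)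
    (h : liminf u atTop = 0) {ε : ℝ} (hε : 0 < ε) :
    ∃ᶠ n in atTop, u n < ε := by
  by_contra hcon
  rw [not_frequently] at hcon
  have hev : ∀ᶠ n in atTop, ε ≤ u n := hcon.mono fun n hn => not_lt.mp hn
  obtain ⟨C, hC⟩ := hb
  have hbd : IsBoundedUnder (· ≤ ·) atTop u := isBoundedUnder_of ⟨C, fun n => hC n⟩
  have := le_liminf_of_le hbd.isCoboundedUnder_ge hev
  rw [h] at this
  linarith

end Aux

theorem stmt18 {X : Type*} [MetricSpace X] [CompactSpace X] [Nonempty X]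
    (f : X → X) (fn : ℕ → X → X)
    (hf : Continuous f) (hfsurj : Function.Surjective f)
    (hfn : ∀ n, Continuous (fn n))
    (hsurj : ∀ n, Function.Surjective (fn n))
    (hcomm : ∀ n, fn n ∘ f = f ∘ fn n)
    (hsum : Summable fun n => supD (fn (n + 1)) f)
    (hdense : ∀ x : X, Dense {y : X |
      Filter.liminf (fun n : ℕ => dist (omega fn n x) (omega fn n y)) atTop = 0}) :
    ∀ x : X, Dense {y : X |
      Filter.liminf (fun n : ℕ => dist (f^[n] x) (f^[n] y)) atTop = 0} := by
  intro x
  obtain ⟨C, hC⟩ := Metric.isBounded_iff.mp (isCompact_univ : IsCompact (univ : Set X)).isBounded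
  have hCd : ∀ a b : X, dist a b ≤ C := fun a b => hC (mem_univ a) (mem_univ b)
  set G : ℕ → ℕ → Set X := fun N k =>
    ⋃ n ∈ {n : ℕ | N ≤ n}, {y : X | dist (f^[n] x) (f^[n] y) < 1 / ((k : ℝ) + 1)} with hG
  have hGopen : ∀ N k, IsOpen (G N k) := by
    intro N k
    refine isOpen_biUnion fun n _ => ?_
    exact isOpen_lt (continuous_const.dist ((hf.iterate n))) continuous_const
  have hGdense : ∀ N k, Dense (G N k) := by
    intro N k
    rw [dense_iff_inter_open]
    intro U hU hUne
    have hε : (0 : ℝ) < 1 / ((k : ℝ) + 1) := by positivity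
    obtain ⟨m, hm⟩ := tail_small (fun j => supD (fn (j + 1)) f) hsum
      (show (0 : ℝ) < 1 / ((k : ℝ) + 1) / 3 by positivity)
    obtain ⟨x', hx'⟩ := omega_surjective fn hsurj m x
    have hVopen : IsOpen (omega fn m ⁻¹' U) := hU.preimage (omega_continuous fn hfn m)
    obtain ⟨u, hu⟩ := hUne
    obtain ⟨v, hv⟩ := omega_surjective fn hsurj m u
    have hVne : (omega fn m ⁻¹' U).Nonempty := ⟨v, by simp [Set.mem_preimage, hv, hu]⟩
    obtain ⟨y', hy'Prox, hy'V⟩ := (hdense x').exists_mem_open hVopen hVne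
    have hProx : liminf (fun n : ℕ => dist (omega fn n x') (omega fn n y')) atTop = 0 := hy'Prox
    have hfreq : ∃ᶠ n in atTop,
        dist (omega fn n x') (omega fn n y') < 1 / ((k : ℝ) + 1) / 3 :=
      frequently_lt_of_liminf_eq_zero ⟨C, fun n => hCd _ _⟩ hProx (by positivity)
    obtain ⟨n, hnd, hnge⟩ := (hfreq.and_eventually (eventually_ge_atTop (N + m))).exists
    have hmn : m + (n - m) = n := by omega
    have h1 : dist (f^[n - m] (omega fn m x')) (omega fn n x') ≤
        ∑ j ∈ Finset.Ico m n, supD (fn (j + 1)) f := by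
      have := telescope f fn hf hfn hcomm (n - m) m x'
      rwa [hmn] at this
    have h2 : dist (f^[n - m] (omega fn m y')) (omega fn n y') ≤
        ∑ j ∈ Finset.Ico m n, supD (fn (j + 1)) f := by
      have := telescope f fn hf hfn hcomm (n - m) m y'
      rwa [hmn] at this
    have hd : dist (f^[n - m] x) (f^[n - m] (omega fn m y')) < 1 / ((k : ℝ) + 1) := by
      rw [← hx']
      have htri : dist (f^[n - m] (omega fn m x')) (f^[n - m] (omega fn m y')) ≤
          dist (f^[n - m] (omega fn m x')) (omega fn n x') +
          dist (omega fn n x') (omega fn n y') +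
          dist (omega fn n y') (f^[n - m] (omega fn m y')) := dist_triangle4 _ _ _ _
      rw [dist_comm (omega fn n y')] at htri
      have hmn' := hm n
      linarith
    refine ⟨omega fn m y', hy'V, ?_⟩
    simp only [hG, Set.mem_iUnion, Set.mem_setOf_eq]
    exact ⟨n - m, by omega, hd⟩
  have hBaire : Dense (⋂ p : ℕ × ℕ, G p.1 p.2) :=
    dense_iInter_of_isOpen (fun p => hGopen p.1 p.2) (fun p => hGdense p.1 p.2)
  refine Dense.mono ?_ hBaire
  intro y hy
  simp only [Set.mem_iInter] at hy
  have hmem : ∀ N k : ℕ, ∃ n, N ≤ n ∧ dist (f^[n] x) (f^[n] y) < 1 / ((k : ℝ) + 1) := by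
    intro N k
    have := hy (N, k)
    simp only [hG, Set.mem_iUnion, Set.mem_setOf_eq] at this
    obtain ⟨n, hn1, hn2⟩ := this
    exact ⟨n, hn1, hn2⟩
  show liminf (fun n : ℕ => dist (f^[n] x) (f^[n] y)) atTop = 0
  have hbdd : IsBoundedUnder (· ≥ ·) atTop (fun n : ℕ => dist (f^[n] x) (f^[n] y)) :=
    isBoundedUnder_of ⟨0, fun n => dist_nonneg⟩
  refine le_antisymm ?_ ?_
  · refine le_of_forall_pos_le_add ?_
    intro ε hε
    obtain ⟨k, hk⟩ := exists_nat_one_div_lt hε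
    have hfr : ∃ᶠ n in atTop, dist (f^[n] x) (f^[n] y) ≤ 1 / ((k : ℝ) + 1) := by
      rw [frequently_atTop]
      intro N
      obtain ⟨n, hn1, hn2⟩ := hmem N k
      exact ⟨n, hn1, le_of_lt hn2⟩
    have := liminf_le_of_frequently_le hfr hbdd
    linarith
  · have hbdd2 : IsBoundedUnder (· ≤ ·) atTop (fun n : ℕ => dist (f^[n] x) (f^[n] y)) :=
      isBoundedUnder_of ⟨C, fun n => hCd _ _⟩
    exact le_liminf_of_le hbdd2.isCoboundedUnder_ge (Eventually.of_forall fun n => dist_nonneg)
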